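/- arXiv:2404.02727 — 4 statements merged into one kernel-verified Lean document; each statement's English description precedes it below -/
import Mathlib

section
/- Let D = [P; Y] ∈ ℝ^{(r+s)×ℓ} have full row rank, with P ∈ ℝ^{r×ℓ}, Y ∈ ℝ^{s×ℓ}, and let Π := Pᵀ(PPᵀ)⁻¹P. Then for every p ∈ ℝʳ and y ∈ ℝˢ, min { ‖(I − Π)a‖₂² : Pa = p, Ya = y } = (y − YP⁺p)ᵀ (Y(I−Π)Yᵀ)⁻¹ (y − YP⁺p), where P⁺ := Pᵀ(PPᵀ)⁻¹ is the Moore–Penrose pseudoinverse of P. -/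
/-!
Write `E := 1 - Π` for the orthogonal projection onto `ker P`. The map `a ↦ E a` sends the
constraint set `{P a = p, Y a = y}` onto `{z ∈ range E : Y z = e}` with `e := y - Y P⁺ p`
(an inverse is `z ↦ P⁺ p + z`), so the problem becomes a minimum-norm problem in `range E`.
Its solution is `w := E Yᵀ M⁻¹ e` with `M := Y E Yᵀ`: every feasible `z` satisfies
`w ⬝ z = (M⁻¹ e) ⬝ Y z = w ⬝ w`, so `z ⬝ z = w ⬝ w + (z - w) ⬝ (z - w)`.
`M = (Y E)(Y E)ᵀ` is invertible because full row rank of `[P; Y]` forbids a nonzero row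
combination of `Y` from lying in the row space of `P`.
-/

open Matrix

namespace Matrix

section CommSemiring

variable {R : Type*} [CommSemiring R] {m n : Type*} [Fintype n]

theorem mulVec_dotProduct [Fintype m] (A : Matrix m n R) (x : n → R) (y : m → R) :
    (A *ᵥ x) ⬝ᵥ y = x ⬝ᵥ (Aᵀ *ᵥ y) := by
  rw [dotProduct_mulVec, vecMul_transpose]

theorem mul_mul_transpose_eq_of_isSymm {E : Matrix n n R} (hEs : E.IsSymm)
    (hEi : IsIdempotentElem E) (Y : Matrix m n R) : Y * E * Yᵀ = Y * E * (Y * E)ᵀ := by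
  rw [transpose_mul, hEs.eq, ← Matrix.mul_assoc, Matrix.mul_assoc Y E E, hEi.eq]

end CommSemiring

section Field

variable {K : Type*} [Field K] {m m' n : Type*} [Fintype m] [Fintype m']

theorem eq_zero_of_vecMul_add_vecMul_eq_zero {A : Matrix m n K} {B : Matrix m' n K}
    (h : Function.Injective (fromRows A B).vecMul) {u : m → K} {v : m' → K}
    (huv : u ᵥ* A + v ᵥ* B = 0) : u = 0 ∧ v = 0 := by
  have : Sum.elim u v = Sum.elim (0 : m → K) (0 : m' → K) := h <| by
    simp only [sumElim_vecMul_fromRows, huv, zero_vecMul, add_zero]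
  exact ⟨funext fun i => congrFun this (.inl i), funext fun j => congrFun this (.inr j)⟩

theorem vecMul_injective_of_fromRows {A : Matrix m n K} {B : Matrix m' n K}
    (h : Function.Injective (fromRows A B).vecMul) : Function.Injective A.vecMul :=
  fun u u' (huu' : u ᵥ* A = u' ᵥ* A) => sub_eq_zero.mp (eq_zero_of_vecMul_add_vecMul_eq_zero h
    (v := 0) (by rw [sub_vecMul, huu', sub_self, zero_vecMul, add_zero])).1

theorem vecMul_injective_of_rank_eq_card [Fintype n] {A : Matrix m n K}
    (h : A.rank = Fintype.card m) : Function.Injective A.vecMul := by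
  rw [vecMul_injective_iff, linearIndependent_iff_card_eq_finrank_span, Set.finrank,
    ← rank_eq_finrank_span_row, h]

end Field

section RowSpaceProj

variable {K : Type*} [Field K] {m n : Type*} [Fintype m] [Fintype n] [DecidableEq m]

/-- The orthogonal projection onto the row space of `P`, meaningful when `P * Pᵀ` is
invertible. -/
noncomputable def rowSpaceProj (P : Matrix m n K) : Matrix n n K := Pᵀ * (P * Pᵀ)⁻¹ * P

theorem rowSpaceProj_isSymm (P : Matrix m n K) : (rowSpaceProj P).IsSymm := by
  rw [rowSpaceProj, IsSymm, transpose_mul, transpose_mul, transpose_nonsing_inv, transpose_mul,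
    transpose_transpose, Matrix.mul_assoc]

variable {P : Matrix m n K}

theorem mul_transpose_mul_inv (hP : IsUnit (P * Pᵀ)) : P * (Pᵀ * (P * Pᵀ)⁻¹) = 1 := by
  rw [← Matrix.mul_assoc, mul_nonsing_inv _ ((isUnit_iff_isUnit_det _).mp hP)]

theorem mul_rowSpaceProj (hP : IsUnit (P * Pᵀ)) : P * rowSpaceProj P = P := by
  rw [rowSpaceProj, ← Matrix.mul_assoc, mul_transpose_mul_inv hP, Matrix.one_mul]

theorem rowSpaceProj_isIdempotentElem (hP : IsUnit (P * Pᵀ)) :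
    IsIdempotentElem (rowSpaceProj P) := by
  rw [IsIdempotentElem]
  nth_rw 1 [rowSpaceProj]
  rw [Matrix.mul_assoc _ P, mul_rowSpaceProj hP, rowSpaceProj]

variable [DecidableEq n]

theorem mul_one_sub_rowSpaceProj (hP : IsUnit (P * Pᵀ)) : P * (1 - rowSpaceProj P) = 0 := by
  rw [Matrix.mul_sub, mul_rowSpaceProj hP, Matrix.mul_one, sub_self]

theorem one_sub_rowSpaceProj_mul_transpose_mul_inv (hP : IsUnit (P * Pᵀ)) :
    (1 - rowSpaceProj P) * (Pᵀ * (P * Pᵀ)⁻¹) = 0 := by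
  rw [Matrix.sub_mul, rowSpaceProj, Matrix.mul_assoc _ P, mul_transpose_mul_inv hP,
    Matrix.one_mul, Matrix.mul_one, sub_self]

theorem setOf_dotProduct_one_sub_rowSpaceProj_eq (hP : IsUnit (P * Pᵀ)) {m' : Type*}
    (Y : Matrix m' n K) (p : m → K) (y : m' → K) :
    {v | ∃ a, P *ᵥ a = p ∧ Y *ᵥ a = y ∧
        v = ((1 - rowSpaceProj P) *ᵥ a) ⬝ᵥ ((1 - rowSpaceProj P) *ᵥ a)} =
      {v | ∃ z, (1 - rowSpaceProj P) *ᵥ z = z ∧ Y *ᵥ z = y - Y *ᵥ ((Pᵀ * (P * Pᵀ)⁻¹) *ᵥ p) ∧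
        v = z ⬝ᵥ z} := by
  ext v
  constructor
  · rintro ⟨a, hPa, hYa, rfl⟩
    refine ⟨(1 - rowSpaceProj P) *ᵥ a, ?_, ?_, rfl⟩
    · rw [mulVec_mulVec, (rowSpaceProj_isIdempotentElem hP).one_sub.eq]
    · rw [mulVec_mulVec, Matrix.mul_sub, Matrix.mul_one, sub_mulVec, hYa, rowSpaceProj,
        ← Matrix.mul_assoc, ← mulVec_mulVec, hPa, ← mulVec_mulVec]
  · rintro ⟨z, hEz, hYz, rfl⟩
    refine ⟨(Pᵀ * (P * Pᵀ)⁻¹) *ᵥ p + z, ?_, ?_, ?_⟩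
    · rw [mulVec_add, mulVec_mulVec, mul_transpose_mul_inv hP, one_mulVec, ← hEz, mulVec_mulVec,
        mul_one_sub_rowSpaceProj hP, zero_mulVec, add_zero]
    · rw [mulVec_add, hYz, add_sub_cancel]
    · rw [mulVec_add, mulVec_mulVec, one_sub_rowSpaceProj_mul_transpose_mul_inv hP, zero_mulVec,
        zero_add, hEz]

end RowSpaceProj

section LinearOrderedField

variable {K : Type*} [Field K] [LinearOrder K] [IsStrictOrderedRing K]
  {m m' n : Type*} [Fintype m] [Fintype m'] [Fintype n] [DecidableEq m]

theorem isUnit_mul_transpose_of_vecMul_injective {A : Matrix m n K}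
    (h : Function.Injective A.vecMul) : IsUnit (A * Aᵀ) := by
  have hker : LinearMap.ker Aᵀ.mulVecLin = ⊥ := by
    rw [LinearMap.ker_eq_bot, coe_mulVecLin]
    convert h using 1
    exact funext (mulVec_transpose A)
  rw [← mulVec_injective_iff_isUnit, ← coe_mulVecLin, ← LinearMap.ker_eq_bot]
  simpa only [transpose_transpose] using (ker_mulVecLin_transpose_mul_self Aᵀ).trans hker

theorem isUnit_mul_one_sub_rowSpaceProj_mul_transpose [DecidableEq m'] [DecidableEq n]
    {P : Matrix m n K} {Y : Matrix m' n K} (h : Function.Injective (fromRows P Y).vecMul) :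
    IsUnit (Y * (1 - rowSpaceProj P) * Yᵀ) := by
  have hP := isUnit_mul_transpose_of_vecMul_injective (vecMul_injective_of_fromRows h)
  rw [mul_mul_transpose_eq_of_isSymm (isSymm_one.sub (rowSpaceProj_isSymm P))
    (rowSpaceProj_isIdempotentElem hP).one_sub]
  refine isUnit_mul_transpose_of_vecMul_injective <|
    (injective_iff_map_eq_zero (Y * (1 - rowSpaceProj P)).vecMulLinear).mpr fun v hv => ?_
  rw [vecMulLinear_apply, ← vecMul_vecMul, vecMul_sub, vecMul_one, sub_eq_zero] at hv
  have hrow : v ᵥ* Y = (v ᵥ* Y ᵥ* (Pᵀ * (P * Pᵀ)⁻¹)) ᵥ* P := by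
    rw [vecMul_vecMul]
    exact hv
  exact (eq_zero_of_vecMul_add_vecMul_eq_zero h (u := -(v ᵥ* Y ᵥ* (Pᵀ * (P * Pᵀ)⁻¹)))
    (by rw [neg_vecMul, ← hrow, neg_add_cancel])).2

theorem isLeast_dotProduct_self_of_mulVec_eq [DecidableEq n] {E : Matrix n n K}
    (hEs : E.IsSymm) (hEi : IsIdempotentElem E) {Y : Matrix m n K} (hM : IsUnit (Y * E * Yᵀ))
    (e : m → K) :
    IsLeast {v | ∃ z, E *ᵥ z = z ∧ Y *ᵥ z = e ∧ v = z ⬝ᵥ z}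
      (e ⬝ᵥ ((Y * E * Yᵀ)⁻¹ *ᵥ e)) := by
  set c := (Y * E * Yᵀ)⁻¹ *ᵥ e with hc
  set w := E *ᵥ (Yᵀ *ᵥ c)
  have hdot : ∀ z, E *ᵥ z = z → w ⬝ᵥ z = c ⬝ᵥ (Y *ᵥ z) := fun z hz => by
    rw [mulVec_dotProduct, hEs.eq, hz, mulVec_dotProduct, transpose_transpose]
  have hEw : E *ᵥ w = w := by rw [mulVec_mulVec, hEi.eq]
  have hYw : Y *ᵥ w = e := by
    rw [mulVec_mulVec, mulVec_mulVec, hc, mulVec_mulVec,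
      mul_nonsing_inv _ ((isUnit_iff_isUnit_det _).mp hM), one_mulVec]
  have hval : w ⬝ᵥ w = e ⬝ᵥ c := by rw [hdot w hEw, hYw, dotProduct_comm]
  refine ⟨⟨w, hEw, hYw, hval.symm⟩, ?_⟩
  rintro _ ⟨z, hEz, hYz, rfl⟩
  have hwz : w ⬝ᵥ z = w ⬝ᵥ w := by rw [hdot z hEz, hYz, hval, dotProduct_comm]
  have hsq : 0 ≤ (z - w) ⬝ᵥ (z - w) := Finset.sum_nonneg fun i _ => mul_self_nonneg _
  rw [sub_dotProduct, dotProduct_sub, dotProduct_sub, dotProduct_comm z w] at hsq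
  linarith

end LinearOrderedField

end Matrix

/-- Closed form of the projection-regularizer elimination: for full row rank
`D = [P; Y]` and `Π = Pᵀ(PPᵀ)⁻¹P`,
`min { ‖(I−Π)a‖² : Pa = p, Ya = y } = (y − YP⁺p)ᵀ(Y(I−Π)Yᵀ)⁻¹(y − YP⁺p)`,
with `P⁺ = Pᵀ(PPᵀ)⁻¹`. -/
theorem stmt_9 (r s ℓ : ℕ) (P : Matrix (Fin r) (Fin ℓ) ℝ)
    (Y : Matrix (Fin s) (Fin ℓ) ℝ)
    (hrank : (Matrix.fromRows P Y).rank = r + s) :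
    let Pi : Matrix (Fin ℓ) (Fin ℓ) ℝ := Pᵀ * (P * Pᵀ)⁻¹ * P
    let Pplus : Matrix (Fin ℓ) (Fin r) ℝ := Pᵀ * (P * Pᵀ)⁻¹
    ∀ (p : Fin r → ℝ) (y : Fin s → ℝ),
      IsLeast {v : ℝ | ∃ a : Fin ℓ → ℝ, P *ᵥ a = p ∧ Y *ᵥ a = y ∧
          v = ((1 - Pi) *ᵥ a) ⬝ᵥ ((1 - Pi) *ᵥ a)}
        ((y - Y *ᵥ (Pplus *ᵥ p)) ⬝ᵥ
          ((Y * (1 - Pi) * Yᵀ)⁻¹ *ᵥ (y - Y *ᵥ (Pplus *ᵥ p)))) := by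
  intro Pi Pplus p y
  have hD : Function.Injective (fromRows P Y).vecMul :=
    vecMul_injective_of_rank_eq_card (by simpa using hrank)
  have hP := isUnit_mul_transpose_of_vecMul_injective (vecMul_injective_of_fromRows hD)
  have hmin := isLeast_dotProduct_self_of_mulVec_eq (isSymm_one.sub (rowSpaceProj_isSymm P))
    (rowSpaceProj_isIdempotentElem hP).one_sub (isUnit_mul_one_sub_rowSpaceProj_mul_transpose hD)
    (y - Y *ᵥ (Pplus *ᵥ p))
  rwa [← setOf_dotProduct_one_sub_rowSpaceProj_eq hP Y p y] at hmin
end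

section
/- Let D = [P; Y] ∈ ℝ^{(r+s)×ℓ} have full row rank with P = [W; U] (W ∈ ℝ^{w×ℓ} of full row rank, U ∈ ℝ^{u×ℓ}). Then for every ξ ∈ ℝ^w, u ∈ ℝ^u, y ∈ ℝˢ, min { ‖a‖₂² : Wa = ξ, Ua = u, Ya = y } = (y − YP⁺(ξ,u))ᵀ Q_reg (y − YP⁺(ξ,u)) + (u − UW⁺ξ)ᵀ R_reg (u − UW⁺ξ) + ξᵀ(WWᵀ)⁻¹ξ, where Q_reg := (Y(I−Π_P)Yᵀ)⁻¹ with Π_P := Pᵀ(PPᵀ)⁻¹P, R_reg := (U(I − Wᵀ(WWᵀ)⁻¹W)Uᵀ)⁻¹, and M⁺ denotes the Moore–Penrose pseudoinverse. -/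
/-!
For `M` of full row rank, `M⁺ b = Mᵀ (M Mᵀ)⁻¹ b` solves `M a = b`, has squared norm
`bᵀ (M Mᵀ)⁻¹ b`, and is orthogonal to `ker M`, so it is the minimum-norm solution.
With a second block of constraints `B a = r`, write `a = M⁺ ξ + d` with `d ∈ ker M`. On `ker M`
the map `B` agrees with `B K`, `K` the orthogonal projection onto `ker M`, so it remains to find
the minimum-norm solution of `B K d = r - B M⁺ ξ`; its Gram matrix `B K Kᵀ Bᵀ = B K Bᵀ` is the
Schur complement. Applied to `[W; U]` this splits `(ξ, u)ᵀ (P Pᵀ)⁻¹ (ξ, u)` into the input and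
state terms, and applied to `[P; Y]` it adds the output term.
-/

open Matrix

namespace Matrix

section CommSemiring

variable {R : Type*} [CommSemiring R] {m n p : Type*} [Fintype n]

theorem fromRows_mulVec_eq_sumElim_iff {M : Matrix m n R} {B : Matrix p n R} {a : n → R}
    {ξ : m → R} {r : p → R} : fromRows M B *ᵥ a = Sum.elim ξ r ↔ M *ᵥ a = ξ ∧ B *ᵥ a = r := by
  rw [fromRows_mulVec, Sum.elim_eq_iff]

theorem transpose_mulVec_dotProduct [Fintype m] (M : Matrix m n R) (c : m → R) (d : n → R) :
    (Mᵀ *ᵥ c) ⬝ᵥ d = c ⬝ᵥ (M *ᵥ d) := by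
  rw [mulVec_transpose, dotProduct_mulVec]

theorem dotProduct_self_add_of_dotProduct_eq_zero {x y : n → R} (h : x ⬝ᵥ y = 0) :
    (x + y) ⬝ᵥ (x + y) = x ⬝ᵥ x + y ⬝ᵥ y := by
  rw [add_dotProduct, dotProduct_add, dotProduct_add, dotProduct_comm y x, h, add_zero, zero_add]

end CommSemiring

section Field

variable {R : Type*} [Field R] {m n p : Type*} [Fintype m] [Fintype n] [DecidableEq m]

/-- The Moore–Penrose pseudoinverse `M⁺` when `M` has full row rank (junk otherwise). -/
noncomputable def rightPinv (M : Matrix m n R) : Matrix n m R := Mᵀ * (M * Mᵀ)⁻¹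

/-- The paper's `1 - Π_M`: the orthogonal projection onto `ker M` when `M` has full row rank. -/
noncomputable def kerProj [DecidableEq n] (M : Matrix m n R) : Matrix n n R :=
  1 - rightPinv M * M

variable {M : Matrix m n R}

theorem rightPinv_mulVec (M : Matrix m n R) (b : m → R) :
    rightPinv M *ᵥ b = Mᵀ *ᵥ ((M * Mᵀ)⁻¹ *ᵥ b) :=
  (mulVec_mulVec _ _ _).symm

theorem mul_rightPinv (hM : IsUnit (M * Mᵀ)) : M * rightPinv M = 1 := by
  rw [rightPinv, ← Matrix.mul_assoc, mul_nonsing_inv _ ((isUnit_iff_isUnit_det _).mp hM)]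

theorem mulVec_rightPinv_mulVec (hM : IsUnit (M * Mᵀ)) (b : m → R) :
    M *ᵥ (rightPinv M *ᵥ b) = b := by
  rw [mulVec_mulVec, mul_rightPinv hM, one_mulVec]

theorem rightPinv_mulVec_dotProduct_eq_zero (b : m → R) {d : n → R} (hd : M *ᵥ d = 0) :
    (rightPinv M *ᵥ b) ⬝ᵥ d = 0 := by
  rw [rightPinv_mulVec, transpose_mulVec_dotProduct, hd, dotProduct_zero]

theorem rightPinv_mulVec_dotProduct_self (hM : IsUnit (M * Mᵀ)) (b : m → R) :
    (rightPinv M *ᵥ b) ⬝ᵥ (rightPinv M *ᵥ b) = b ⬝ᵥ ((M * Mᵀ)⁻¹ *ᵥ b) := by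
  nth_rewrite 1 [rightPinv_mulVec]
  rw [transpose_mulVec_dotProduct, mulVec_rightPinv_mulVec hM, dotProduct_comm]

variable [DecidableEq n]

theorem mul_kerProj (hM : IsUnit (M * Mᵀ)) : M * kerProj M = 0 := by
  rw [kerProj, Matrix.mul_sub, Matrix.mul_one, ← Matrix.mul_assoc, mul_rightPinv hM,
    Matrix.one_mul, sub_self]

theorem transpose_kerProj (M : Matrix m n R) : (kerProj M)ᵀ = kerProj M := by
  rw [kerProj, rightPinv, transpose_sub, transpose_one, transpose_mul, transpose_mul,
    transpose_transpose, transpose_nonsing_inv, transpose_mul, transpose_transpose,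
    Matrix.mul_assoc]

theorem kerProj_mul_self (hM : IsUnit (M * Mᵀ)) : kerProj M * kerProj M = kerProj M := by
  nth_rewrite 1 [kerProj]
  rw [Matrix.sub_mul, Matrix.one_mul, Matrix.mul_assoc, mul_kerProj hM, Matrix.mul_zero,
    sub_zero]

theorem kerProj_mulVec_of_mulVec_eq_zero {d : n → R} (hd : M *ᵥ d = 0) :
    kerProj M *ᵥ d = d := by
  rw [kerProj, sub_mulVec, one_mulVec, ← mulVec_mulVec, hd, mulVec_zero, sub_zero]

theorem mul_kerProj_mul_transpose (hM : IsUnit (M * Mᵀ)) (B : Matrix p n R) :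
    B * kerProj M * Bᵀ = B * kerProj M * (B * kerProj M)ᵀ := by
  rw [transpose_mul, transpose_kerProj, Matrix.mul_assoc, Matrix.mul_assoc,
    ← Matrix.mul_assoc (kerProj M), kerProj_mul_self hM]

end Field

section LinearOrderedField

variable {R : Type*} [Field R] [LinearOrder R] [IsStrictOrderedRing R]
  {m n p : Type*} [Fintype m] [Fintype n] [Fintype p] [DecidableEq m]

theorem isUnit_mul_transpose_iff (A : Matrix m n R) :
    IsUnit (A * Aᵀ) ↔ ∀ v, v ᵥ* A = 0 → v = 0 := by
  have hker := ker_mulVecLin_transpose_mul_self Aᵀ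
  rw [transpose_transpose] at hker
  rw [← mulVec_injective_iff_isUnit, ← coe_mulVecLin, ← LinearMap.ker_eq_bot, hker,
    LinearMap.ker_eq_bot']
  simp only [mulVecLin_apply, mulVec_transpose]

theorem isUnit_mul_transpose_of_rank_eq {A : Matrix m n R} (h : A.rank = Fintype.card m) :
    IsUnit (A * Aᵀ) := by
  rw [← linearIndependent_rows_iff_isUnit, linearIndependent_iff_card_eq_finrank_span,
    Set.finrank, ← rank_eq_finrank_span_row, rank_self_mul_transpose, h]

variable [DecidableEq p] {M : Matrix m n R} {B : Matrix p n R}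

theorem isUnit_mul_transpose_of_fromRows (h : IsUnit (fromRows M B * (fromRows M B)ᵀ)) :
    IsUnit (M * Mᵀ) := by
  rw [isUnit_mul_transpose_iff] at h ⊢
  intro v hv
  have := h (Sum.elim v 0) (by rw [sumElim_vecMul_fromRows, hv, zero_vecMul, add_zero])
  exact funext fun i => congrFun this (Sum.inl i)

theorem isUnit_mul_kerProj_mul_transpose_of_fromRows [DecidableEq n]
    (h : IsUnit (fromRows M B * (fromRows M B)ᵀ)) : IsUnit (B * kerProj M * Bᵀ) := by
  have hM := isUnit_mul_transpose_of_fromRows h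
  rw [mul_kerProj_mul_transpose hM, isUnit_mul_transpose_iff]
  rw [isUnit_mul_transpose_iff] at h
  intro v hv
  have hvB : v ᵥ* B = ((v ᵥ* B) ᵥ* rightPinv M) ᵥ* M := by
    rwa [← vecMul_vecMul, kerProj, vecMul_sub, vecMul_one, sub_eq_zero, ← vecMul_vecMul] at hv
  have := h (Sum.elim (-((v ᵥ* B) ᵥ* rightPinv M)) v)
    (by rw [sumElim_vecMul_fromRows, neg_vecMul, ← hvB, neg_add_cancel])
  exact funext fun i => congrFun this (Sum.inr i)

theorem le_dotProduct_self_of_mulVec_eq (hM : IsUnit (M * Mᵀ)) {a : n → R} {b : m → R}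
    (ha : M *ᵥ a = b) : b ⬝ᵥ ((M * Mᵀ)⁻¹ *ᵥ b) ≤ a ⬝ᵥ a := by
  set x₀ := rightPinv M *ᵥ b
  have hd : M *ᵥ (a - x₀) = 0 := by rw [mulVec_sub, ha, mulVec_rightPinv_mulVec hM, sub_self]
  calc b ⬝ᵥ ((M * Mᵀ)⁻¹ *ᵥ b) ≤ x₀ ⬝ᵥ x₀ + (a - x₀) ⬝ᵥ (a - x₀) := by
        rw [rightPinv_mulVec_dotProduct_self hM]
        exact le_add_of_nonneg_right (Finset.sum_nonneg fun _ _ => mul_self_nonneg _)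
    _ = a ⬝ᵥ a := by
        rw [← dotProduct_self_add_of_dotProduct_eq_zero
          (rightPinv_mulVec_dotProduct_eq_zero b hd), add_sub_cancel]

theorem isLeast_dotProduct_self_of_mulVec_eq_s10 (hM : IsUnit (M * Mᵀ)) (b : m → R) :
    IsLeast {v | ∃ a, M *ᵥ a = b ∧ v = a ⬝ᵥ a} (b ⬝ᵥ ((M * Mᵀ)⁻¹ *ᵥ b)) := by
  refine ⟨⟨_, mulVec_rightPinv_mulVec hM b, (rightPinv_mulVec_dotProduct_self hM b).symm⟩, ?_⟩
  rintro _ ⟨a, ha, rfl⟩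
  exact le_dotProduct_self_of_mulVec_eq hM ha

variable [DecidableEq n]

theorem isLeast_dotProduct_self_of_fromRows (M : Matrix m n R) (B : Matrix p n R)
    (h : IsUnit (fromRows M B * (fromRows M B)ᵀ)) (ξ : m → R) (r : p → R) :
    IsLeast {v | ∃ a, M *ᵥ a = ξ ∧ B *ᵥ a = r ∧ v = a ⬝ᵥ a}
      ((r - B *ᵥ (rightPinv M *ᵥ ξ)) ⬝ᵥ
          ((B * kerProj M * Bᵀ)⁻¹ *ᵥ (r - B *ᵥ (rightPinv M *ᵥ ξ)))
        + ξ ⬝ᵥ ((M * Mᵀ)⁻¹ *ᵥ ξ)) := by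
  have hM := isUnit_mul_transpose_of_fromRows h
  have hS := isUnit_mul_kerProj_mul_transpose_of_fromRows h
  rw [mul_kerProj_mul_transpose hM] at hS ⊢
  set x₀ := rightPinv M *ᵥ ξ
  set e := r - B *ᵥ x₀
  have hsplit : ∀ d, M *ᵥ d = 0 → (x₀ + d) ⬝ᵥ (x₀ + d) = d ⬝ᵥ d + ξ ⬝ᵥ ((M * Mᵀ)⁻¹ *ᵥ ξ) := by
    intro d hd
    rw [dotProduct_self_add_of_dotProduct_eq_zero (rightPinv_mulVec_dotProduct_eq_zero ξ hd),
      rightPinv_mulVec_dotProduct_self hM, add_comm]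
  constructor
  · set d := rightPinv (B * kerProj M) *ᵥ e with hd
    have hMd : M *ᵥ d = 0 := by
      rw [hd, rightPinv_mulVec, mulVec_mulVec, transpose_mul, transpose_kerProj, ← Matrix.mul_assoc,
        mul_kerProj hM, Matrix.zero_mul, zero_mulVec]
    have hBd : B *ᵥ d = e := by
      rw [← kerProj_mulVec_of_mulVec_eq_zero hMd, mulVec_mulVec, mulVec_rightPinv_mulVec hS]
    refine ⟨x₀ + d, ?_, ?_, ?_⟩
    · rw [mulVec_add, mulVec_rightPinv_mulVec hM, hMd, add_zero]
    · rw [mulVec_add, hBd, add_sub_cancel]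
    · rw [hsplit d hMd, rightPinv_mulVec_dotProduct_self hS]
  · rintro _ ⟨a, hMa, hBa, rfl⟩
    have hd : M *ᵥ (a - x₀) = 0 := by rw [mulVec_sub, hMa, mulVec_rightPinv_mulVec hM, sub_self]
    have hBd : (B * kerProj M) *ᵥ (a - x₀) = e := by
      rw [← mulVec_mulVec, kerProj_mulVec_of_mulVec_eq_zero hd, mulVec_sub, hBa]
    calc _ ≤ (a - x₀) ⬝ᵥ (a - x₀) + ξ ⬝ᵥ ((M * Mᵀ)⁻¹ *ᵥ ξ) :=
          add_le_add_left (le_dotProduct_self_of_mulVec_eq hS hBd) _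
      _ = a ⬝ᵥ a := by rw [← hsplit _ hd, add_sub_cancel]

end LinearOrderedField

end Matrix

theorem stmt_10_general (w u s ℓ : ℕ)
    (W : Matrix (Fin w) (Fin ℓ) ℝ) (U : Matrix (Fin u) (Fin ℓ) ℝ)
    (Y : Matrix (Fin s) (Fin ℓ) ℝ)
    (hrank : (Matrix.fromRows (Matrix.fromRows W U) Y).rank = (w + u) + s) :
    let P : Matrix (Fin w ⊕ Fin u) (Fin ℓ) ℝ := Matrix.fromRows W U
    let PiP : Matrix (Fin ℓ) (Fin ℓ) ℝ := Pᵀ * (P * Pᵀ)⁻¹ * P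
    let Pplus : Matrix (Fin ℓ) (Fin w ⊕ Fin u) ℝ := Pᵀ * (P * Pᵀ)⁻¹
    let Wplus : Matrix (Fin ℓ) (Fin w) ℝ := Wᵀ * (W * Wᵀ)⁻¹
    let Qreg : Matrix (Fin s) (Fin s) ℝ := (Y * (1 - PiP) * Yᵀ)⁻¹
    let Rreg : Matrix (Fin u) (Fin u) ℝ :=
      (U * (1 - Wᵀ * (W * Wᵀ)⁻¹ * W) * Uᵀ)⁻¹
    ∀ (ξ : Fin w → ℝ) (uf : Fin u → ℝ) (y : Fin s → ℝ),
      IsLeast {v : ℝ | ∃ a : Fin ℓ → ℝ,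
          W *ᵥ a = ξ ∧ U *ᵥ a = uf ∧ Y *ᵥ a = y ∧ v = a ⬝ᵥ a}
        ((y - Y *ᵥ (Pplus *ᵥ Sum.elim ξ uf)) ⬝ᵥ
            (Qreg *ᵥ (y - Y *ᵥ (Pplus *ᵥ Sum.elim ξ uf)))
          + (uf - U *ᵥ (Wplus *ᵥ ξ)) ⬝ᵥ (Rreg *ᵥ (uf - U *ᵥ (Wplus *ᵥ ξ)))
          + ξ ⬝ᵥ ((W * Wᵀ)⁻¹ *ᵥ ξ)) := by
  intro P PiP Pplus Wplus Qreg Rreg ξ uf y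
  have hD : IsUnit (fromRows P Y * (fromRows P Y)ᵀ) :=
    isUnit_mul_transpose_of_rank_eq (by simpa using hrank)
  have hP := isUnit_mul_transpose_of_fromRows hD
  -- both sides are `min {‖a‖² : W a = ξ, U a = uf}`
  have hstate : Sum.elim ξ uf ⬝ᵥ ((P * Pᵀ)⁻¹ *ᵥ Sum.elim ξ uf)
      = (uf - U *ᵥ (Wplus *ᵥ ξ)) ⬝ᵥ (Rreg *ᵥ (uf - U *ᵥ (Wplus *ᵥ ξ)))
        + ξ ⬝ᵥ ((W * Wᵀ)⁻¹ *ᵥ ξ) := by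
    refine (isLeast_dotProduct_self_of_mulVec_eq_s10 hP _).unique ?_
    simp only [P, fromRows_mulVec_eq_sumElim_iff, and_assoc]
    exact isLeast_dotProduct_self_of_fromRows W U hP ξ uf
  have hQ := isLeast_dotProduct_self_of_fromRows P Y hD (Sum.elim ξ uf) y
  simp only [P, fromRows_mulVec_eq_sumElim_iff, and_assoc] at hQ
  rwa [hstate, ← add_assoc] at hQ

/-- Closed form (eq. (8)) of the 2-norm regularizer elimination: with
`D = [W; U; Y]` of full row rank and `W` of full row rank,
`min { ‖a‖² : Wa = ξ, Ua = u, Ya = y }` decomposes into an output-deviation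
term, an input-deviation term, and a state term. -/
theorem stmt_10 (w u s ℓ : ℕ)
    (W : Matrix (Fin w) (Fin ℓ) ℝ) (U : Matrix (Fin u) (Fin ℓ) ℝ)
    (Y : Matrix (Fin s) (Fin ℓ) ℝ)
    (hW : W.rank = w)
    (hrank : (Matrix.fromRows (Matrix.fromRows W U) Y).rank = (w + u) + s) :
    let P : Matrix (Fin w ⊕ Fin u) (Fin ℓ) ℝ := Matrix.fromRows W U
    let PiP : Matrix (Fin ℓ) (Fin ℓ) ℝ := Pᵀ * (P * Pᵀ)⁻¹ * P
    let Pplus : Matrix (Fin ℓ) (Fin w ⊕ Fin u) ℝ := Pᵀ * (P * Pᵀ)⁻¹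
    let Wplus : Matrix (Fin ℓ) (Fin w) ℝ := Wᵀ * (W * Wᵀ)⁻¹
    let Qreg : Matrix (Fin s) (Fin s) ℝ := (Y * (1 - PiP) * Yᵀ)⁻¹
    let Rreg : Matrix (Fin u) (Fin u) ℝ :=
      (U * (1 - Wᵀ * (W * Wᵀ)⁻¹ * W) * Uᵀ)⁻¹
    ∀ (ξ : Fin w → ℝ) (uf : Fin u → ℝ) (y : Fin s → ℝ),
      IsLeast {v : ℝ | ∃ a : Fin ℓ → ℝ,
          W *ᵥ a = ξ ∧ U *ᵥ a = uf ∧ Y *ᵥ a = y ∧ v = a ⬝ᵥ a}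
        ((y - Y *ᵥ (Pplus *ᵥ Sum.elim ξ uf)) ⬝ᵥ
            (Qreg *ᵥ (y - Y *ᵥ (Pplus *ᵥ Sum.elim ξ uf)))
          + (uf - U *ᵥ (Wplus *ᵥ ξ)) ⬝ᵥ (Rreg *ᵥ (uf - U *ᵥ (Wplus *ᵥ ξ)))
          + ξ ⬝ᵥ ((W * Wᵀ)⁻¹ *ᵥ ξ)) :=
  stmt_10_general w u s ℓ W U Y hrank
end

section
/- Let Q, Q_reg be symmetric p×p matrices with Q positive semidefinite, Q_reg positive definite, λ > 0, and let ŷ_SPC : ℝ^w × ℝᵐ → ℝᵖ be affine and y_ref ∈ ℝᵖ. Then for each (ξ, u), the unique minimizer over y ∈ ℝᵖ of ‖y − y_ref‖²_Q + λ‖y − ŷ_SPC(ξ,u)‖²_{Q_reg} is ŷ_DPC(ξ, u) = (λQ_reg + Q)⁻¹(λQ_reg ŷ_SPC(ξ,u) + Q y_ref), and ŷ_DPC is an affine function of (ξ, u). -/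
/-!
Writing `M = λ Q_reg + Q`, the candidate `ŷ_DPC` is the solution of the normal equations
`M y = λ Q_reg ŷ_SPC + Q y_ref`. Expanding both quadratic forms around this solution, the linear
terms cancel by the normal equations, so the cost is its value at `ŷ_DPC` plus the quadratic form
of `M` in `y - ŷ_DPC`. Since `M` is positive definite, `ŷ_DPC` is the unique minimizer, and it is
affine in `(ξ, u)` because it is an affine image of the affine map `ŷ_SPC`.
-/

open Matrix

namespace Matrix

variable {n : Type*} [Fintype n]

theorem add_dotProduct_mulVec_add {R : Type*} [CommRing R] {A : Matrix n n R} (hA : A.IsSymm)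
    (d e : n → R) :
    (d + e) ⬝ᵥ (A *ᵥ (d + e)) = d ⬝ᵥ (A *ᵥ d) + e ⬝ᵥ (A *ᵥ e) + 2 * (d ⬝ᵥ (A *ᵥ e)) := by
  have hswap : e ⬝ᵥ (A *ᵥ d) = d ⬝ᵥ (A *ᵥ e) := by
    rw [dotProduct_mulVec, ← mulVec_transpose, hA.eq, dotProduct_comm]
  simp only [mulVec_add, dotProduct_add, add_dotProduct, hswap]
  ring

theorem PosDef.isMin_and_unique_of_eq_add {M : Matrix n n ℝ} (hM : M.PosDef)
    {f : (n → ℝ) → ℝ} {z : n → ℝ} (hf : ∀ y, f y = f z + (y - z) ⬝ᵥ (M *ᵥ (y - z))) :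
    (∀ y, f z ≤ f y) ∧ (∀ y, f y = f z → y = z) := by
  refine ⟨fun y => ?_, fun y hy => ?_⟩
  · have := hM.posSemidef.dotProduct_mulVec_nonneg (y - z)
    rw [hf y]
    simp only [star_trivial] at this
    linarith
  · by_contra hne
    have := hM.dotProduct_mulVec_pos (sub_ne_zero_of_ne hne)
    rw [hf y] at hy
    simp only [star_trivial] at this
    linarith

end Matrix

section RegularizedCost

variable {n : Type*} [Fintype n]

def regularizedCost (Q R : Matrix n n ℝ) (lam : ℝ) (r s y : n → ℝ) : ℝ :=
  (y - r) ⬝ᵥ (Q *ᵥ (y - r)) + lam * ((y - s) ⬝ᵥ (R *ᵥ (y - s)))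

theorem regularizedCost_eq_add {Q R : Matrix n n ℝ} (hQ : Q.IsSymm) (hR : R.IsSymm)
    {lam : ℝ} {r s z : n → ℝ} (hz : (lam • R + Q) *ᵥ z = lam • (R *ᵥ s) + Q *ᵥ r) (y : n → ℝ) :
    regularizedCost Q R lam r s y =
      regularizedCost Q R lam r s z + (y - z) ⬝ᵥ ((lam • R + Q) *ᵥ (y - z)) := by
  have hcross : Q *ᵥ (z - r) + lam • (R *ᵥ (z - s)) = 0 := by
    rw [add_mulVec, smul_mulVec, ← sub_eq_zero] at hz
    rw [← hz, mulVec_sub, mulVec_sub, smul_sub]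
    abel
  have hcross' := congrArg ((y - z) ⬝ᵥ ·) hcross
  simp only [dotProduct_add, dotProduct_smul, smul_eq_mul, dotProduct_zero] at hcross'
  unfold regularizedCost
  rw [← sub_add_sub_cancel y z r, ← sub_add_sub_cancel y z s, add_dotProduct_mulVec_add hQ,
    add_dotProduct_mulVec_add hR]
  simp only [add_mulVec, smul_mulVec, dotProduct_add, dotProduct_smul, smul_eq_mul]
  linear_combination 2 * hcross'

end RegularizedCost

theorem exists_affine_mulVec_add {R : Type*} [CommRing R] {ι κ μ ν : Type*} [Fintype ι]
    [Fintype κ] [Fintype μ] {g : (κ → R) → (μ → R) → (ι → R)}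
    (hg : ∃ (A : Matrix ι κ R) (B : Matrix ι μ R) (c : ι → R),
      ∀ ξ u, g ξ u = A *ᵥ ξ + B *ᵥ u + c)
    (N : Matrix ν ι R) (d : ν → R) :
    ∃ (A' : Matrix ν κ R) (B' : Matrix ν μ R) (c' : ν → R),
      ∀ ξ u, N *ᵥ g ξ u + d = A' *ᵥ ξ + B' *ᵥ u + c' := by
  obtain ⟨A, B, c, hABc⟩ := hg
  refine ⟨N * A, N * B, N *ᵥ c + d, fun ξ u => ?_⟩
  simp only [hABc, mulVec_add, mulVec_mulVec]
  abel

theorem stmt_11_general (p w m : ℕ) (Q Qreg : Matrix (Fin p) (Fin p) ℝ)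
    (hQ : Q.PosSemidef) (hQreg : Qreg.PosDef)
    (lam : ℝ) (hlam : 0 < lam)
    (yspc : (Fin w → ℝ) → (Fin m → ℝ) → (Fin p → ℝ))
    (haff : ∃ (A : Matrix (Fin p) (Fin w) ℝ) (B : Matrix (Fin p) (Fin m) ℝ)
        (c : Fin p → ℝ), ∀ ξ u, yspc ξ u = A *ᵥ ξ + B *ᵥ u + c)
    (yref : Fin p → ℝ) :
    let ydpc : (Fin w → ℝ) → (Fin m → ℝ) → (Fin p → ℝ) :=
      fun ξ u => (lam • Qreg + Q)⁻¹ *ᵥ (lam • (Qreg *ᵥ yspc ξ u) + Q *ᵥ yref)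
    let f : (Fin w → ℝ) → (Fin m → ℝ) → (Fin p → ℝ) → ℝ :=
      fun ξ u y => (y - yref) ⬝ᵥ (Q *ᵥ (y - yref))
        + lam * ((y - yspc ξ u) ⬝ᵥ (Qreg *ᵥ (y - yspc ξ u)))
    (∀ ξ u, (∀ y, f ξ u (ydpc ξ u) ≤ f ξ u y) ∧
        (∀ y, f ξ u y = f ξ u (ydpc ξ u) → y = ydpc ξ u)) ∧
    (∃ (A' : Matrix (Fin p) (Fin w) ℝ) (B' : Matrix (Fin p) (Fin m) ℝ)
        (c' : Fin p → ℝ), ∀ ξ u, ydpc ξ u = A' *ᵥ ξ + B' *ᵥ u + c') := by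
  intro ydpc f
  set M := lam • Qreg + Q
  have hM : M.PosDef := (hQreg.smul hlam).add_posSemidef hQ
  have hnormal (ξ u) : M *ᵥ ydpc ξ u = lam • (Qreg *ᵥ yspc ξ u) + Q *ᵥ yref := by
    rw [mulVec_mulVec, mul_nonsing_inv M hM.det_pos.ne'.isUnit, one_mulVec]
  have hQs : Q.IsSymm := isHermitian_iff_isSymm.mp hQ.isHermitian
  have hQregs : Qreg.IsSymm := isHermitian_iff_isSymm.mp hQreg.isHermitian
  refine ⟨fun ξ u => hM.isMin_and_unique_of_eq_add
    (regularizedCost_eq_add hQs hQregs (hnormal ξ u)), ?_⟩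
  obtain ⟨A', B', c', h⟩ := exists_affine_mulVec_add haff (M⁻¹ * lam • Qreg) (M⁻¹ *ᵥ (Q *ᵥ yref))
  refine ⟨A', B', c', fun ξ u => ?_⟩
  rw [← h, ← mulVec_mulVec, ← mulVec_add, smul_mulVec]

/-- Theorem 1 (implicit predictor): for each `(ξ, u)`, the unique minimizer
over `y` of `‖y − y_ref‖²_Q + λ‖y − ŷ_SPC(ξ,u)‖²_{Q_reg}` is
`ŷ_DPC(ξ,u) = (λQ_reg + Q)⁻¹(λ Q_reg ŷ_SPC(ξ,u) + Q y_ref)`, which is an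
affine function of `(ξ, u)`. -/
theorem stmt_11 (p w m : ℕ) (Q Qreg : Matrix (Fin p) (Fin p) ℝ)
    (hQs : Q.IsSymm) (hQregs : Qreg.IsSymm)
    (hQ : Q.PosSemidef) (hQreg : Qreg.PosDef)
    (lam : ℝ) (hlam : 0 < lam)
    (yspc : (Fin w → ℝ) → (Fin m → ℝ) → (Fin p → ℝ))
    (haff : ∃ (A : Matrix (Fin p) (Fin w) ℝ) (B : Matrix (Fin p) (Fin m) ℝ)
        (c : Fin p → ℝ), ∀ ξ u, yspc ξ u = A *ᵥ ξ + B *ᵥ u + c)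
    (yref : Fin p → ℝ) :
    let ydpc : (Fin w → ℝ) → (Fin m → ℝ) → (Fin p → ℝ) :=
      fun ξ u => (lam • Qreg + Q)⁻¹ *ᵥ (lam • (Qreg *ᵥ yspc ξ u) + Q *ᵥ yref)
    let f : (Fin w → ℝ) → (Fin m → ℝ) → (Fin p → ℝ) → ℝ :=
      fun ξ u y => (y - yref) ⬝ᵥ (Q *ᵥ (y - yref))
        + lam * ((y - yspc ξ u) ⬝ᵥ (Qreg *ᵥ (y - yspc ξ u)))
    (∀ ξ u, (∀ y, f ξ u (ydpc ξ u) ≤ f ξ u y) ∧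
        (∀ y, f ξ u y = f ξ u (ydpc ξ u) → y = ydpc ξ u)) ∧
    (∃ (A' : Matrix (Fin p) (Fin w) ℝ) (B' : Matrix (Fin p) (Fin m) ℝ)
        (c' : Fin p → ℝ), ∀ ξ u, ydpc ξ u = A' *ᵥ ξ + B' *ᵥ u + c') :=
  stmt_11_general p w m Q Qreg hQ hQreg lam hlam yspc haff yref
end

section
/- Let Q_reg ≻ 0, Q ⪰ 0 be symmetric p×p matrices, λ > 0, and set M := (λQ_reg + Q)⁻¹λQ_reg and N := (λQ_reg + Q)⁻¹Q. Then M + N = I, and the implicit predictor ŷ_DPC = M ŷ_SPC + N y_ref satisfies: ŷ_DPC → ŷ_SPC as λ → ∞ (for fixed ŷ_SPC, y_ref), i.e., lim_{λ→∞} (λQ_reg + Q)⁻¹λQ_reg = I. -/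
open Matrix Filter Topology

/-!
Since `λ • Q_reg + Q = λ • (Q_reg + λ⁻¹ • Q)`, the weight `(λ • Q_reg + Q)⁻¹ * (λ • Q_reg)` equals
`(Q_reg + λ⁻¹ • Q)⁻¹ * Q_reg`, which tends to `Q_reg⁻¹ * Q_reg = 1` as `λ⁻¹ → 0` because matrix
inversion is continuous at the invertible `Q_reg`. Positive definiteness makes `λ • Q_reg + Q`
invertible, so the two weights sum to `1` and the predictor converges to `ŷ_SPC`.
-/

namespace Matrix

variable {n : Type*} [Fintype n] [DecidableEq n]

theorem inv_smul_mul_smul {K : Type*} [Field K] {c : K} (hc : c ≠ 0) (X Y : Matrix n n K) :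
    (c • X)⁻¹ * (c • Y) = X⁻¹ * Y := by
  by_cases hX : IsUnit X.det
  · have : Invertible c := invertibleOfNonzero hc
    rw [inv_smul X c hX, invOf_eq_inv, smul_mul_smul_comm, inv_mul_cancel₀ hc, one_smul]
  · have hcX : ¬IsUnit (c • X).det := by
      rwa [det_smul, IsUnit.mul_iff, not_and_or, or_iff_right (by simpa using pow_ne_zero _ hc)]
    rw [nonsing_inv_apply_not_isUnit _ hcX, nonsing_inv_apply_not_isUnit _ hX, zero_mul, zero_mul]

theorem smul_add_inv_mul_smul {K : Type*} [Field K] {c : K} (hc : c ≠ 0) (A B : Matrix n n K) :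
    (c • A + B)⁻¹ * (c • A) = (A + c⁻¹ • B)⁻¹ * A := by
  rw [← inv_smul_mul_smul hc (A + c⁻¹ • B), smul_add, smul_inv_smul₀ hc]

theorem tendsto_add_smul_inv_mul_nhds_zero {𝕜 : Type*} [NormedField 𝕜] {A : Matrix n n 𝕜}
    (hA : IsUnit A.det) (B : Matrix n n 𝕜) :
    Tendsto (fun t : 𝕜 => (A + t • B)⁻¹ * A) (𝓝 0) (𝓝 1) := by
  have hinv : ContinuousAt Inv.inv A := continuousAt_matrix_inv A <| by
    simpa only [Ring.inverse_eq_inv'] using continuousAt_inv₀ hA.ne_zero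
  have hpath : Tendsto (fun t : 𝕜 => A + t • B) (𝓝 0) (𝓝 A) := by
    simpa using (show Continuous (fun t : 𝕜 => A + t • B) by fun_prop).tendsto 0
  simpa [nonsing_inv_mul A hA] using (hinv.tendsto.comp hpath).mul_const A

theorem tendsto_smul_add_inv_mul_smul_atTop {A : Matrix n n ℝ} (hA : IsUnit A.det)
    (B : Matrix n n ℝ) :
    Tendsto (fun c : ℝ => (c • A + B)⁻¹ * (c • A)) atTop (𝓝 1) := by
  refine ((tendsto_add_smul_inv_mul_nhds_zero hA B).comp tendsto_inv_atTop_zero).congr' ?_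
  filter_upwards [eventually_ne_atTop 0] with c hc
  exact (smul_add_inv_mul_smul hc A B).symm

theorem tendsto_mulVec_add_mulVec_of_add_eq_one {R α : Type*} [CommRing R] [TopologicalSpace R]
    [IsTopologicalRing R] {l : Filter α} {M N : α → Matrix n n R}
    (hM : Tendsto M l (𝓝 1)) (hMN : ∀ᶠ a in l, M a + N a = 1) (y z : n → R) :
    Tendsto (fun a => M a *ᵥ y + N a *ᵥ z) l (𝓝 y) := by
  have hlim : Tendsto (fun a => M a *ᵥ y + (1 - M a) *ᵥ z) l (𝓝 y) := by
    have hcont : Continuous fun X : Matrix n n R => X *ᵥ y + (1 - X) *ᵥ z := by fun_prop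
    simpa [Function.comp_def] using (hcont.tendsto 1).comp hM
  refine hlim.congr' ?_
  filter_upwards [hMN] with a ha
  rw [← ha, add_sub_cancel_left]

end Matrix

theorem stmt_13_general (p : ℕ) (Q Qreg : Matrix (Fin p) (Fin p) ℝ)
    (hQ : Q.PosSemidef) (hQreg : Qreg.PosDef) :
    (∀ lam : ℝ, 0 < lam →
      (lam • Qreg + Q)⁻¹ * (lam • Qreg) + (lam • Qreg + Q)⁻¹ * Q = 1) ∧
    Tendsto (fun lam : ℝ => (lam • Qreg + Q)⁻¹ * (lam • Qreg)) atTop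
      (nhds (1 : Matrix (Fin p) (Fin p) ℝ)) ∧
    (∀ yspc yref : Fin p → ℝ,
      Tendsto (fun lam : ℝ =>
          (lam • Qreg + Q)⁻¹ *ᵥ (lam • (Qreg *ᵥ yspc) + Q *ᵥ yref)) atTop
        (nhds yspc)) := by
  have hsum : ∀ lam : ℝ, 0 < lam →
      (lam • Qreg + Q)⁻¹ * (lam • Qreg) + (lam • Qreg + Q)⁻¹ * Q = 1 := fun lam hlam => by
    rw [← mul_add, nonsing_inv_mul _ ((hQreg.smul hlam).add_posSemidef hQ).det_pos.ne'.isUnit]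
  have hlim := tendsto_smul_add_inv_mul_smul_atTop hQreg.det_pos.ne'.isUnit Q
  refine ⟨hsum, hlim, fun yspc yref => ?_⟩
  have hweighted := tendsto_mulVec_add_mulVec_of_add_eq_one hlim
    (eventually_gt_atTop 0 |>.mono hsum) yspc yref
  simpa only [mulVec_add, ← smul_mulVec, mulVec_mulVec] using hweighted

/-- The DPC implicit predictor is a matrix-weighted average of the SPC
prediction and the reference: `M + N = I` for every `λ > 0`, and
`(λQ_reg + Q)⁻¹ λQ_reg → I` as `λ → ∞`, so that `ŷ_DPC → ŷ_SPC`. -/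
theorem stmt_13 (p : ℕ) (Q Qreg : Matrix (Fin p) (Fin p) ℝ)
    (hQs : Q.IsSymm) (hQregs : Qreg.IsSymm)
    (hQ : Q.PosSemidef) (hQreg : Qreg.PosDef) :
    (∀ lam : ℝ, 0 < lam →
      (lam • Qreg + Q)⁻¹ * (lam • Qreg) + (lam • Qreg + Q)⁻¹ * Q = 1) ∧
    Tendsto (fun lam : ℝ => (lam • Qreg + Q)⁻¹ * (lam • Qreg)) atTop
      (nhds (1 : Matrix (Fin p) (Fin p) ℝ)) ∧
    (∀ yspc yref : Fin p → ℝ,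
      Tendsto (fun lam : ℝ =>
          (lam • Qreg + Q)⁻¹ *ᵥ (lam • (Qreg *ᵥ yspc) + Q *ᵥ yref)) atTop
        (nhds yspc)) :=
  stmt_13_general p Q Qreg hQ hQreg
end
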